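/- For every real number C > 0 and every g ∈ A_C with vanishing constant coefficient, the series ∑_{n=0}^∞ (−g)^n converges in (A_C, ‖·‖_C) and its sum is a two-sided inverse of 1 + g in A_C; in particular 1 + g is a unit of the ring A_C. -/

import Mathlib

open scoped ENNReal

/-- The norm `‖f‖_C = ∑_{j=0}^∞ |a_j| C^j / j!` of a formal power series
`f = ∑ a_j t^j ∈ ℂ[[t]]`, valued in `[0,∞]`. -/
noncomputable def normC (C : ℝ) (f : PowerSeries ℂ) : ℝ≥0∞ :=
  ∑' j : ℕ, (‖(PowerSeries.coeff (R := ℂ) j) f‖₊ : ℝ≥0∞) * ENNReal.ofReal (C ^ j / (j.factorial : ℝ))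

/-- `A_C = {f ∈ ℂ[[t]] : ‖f‖_C < ∞}`. -/
def Asub (C : ℝ) : Set (PowerSeries ℂ) := {f | normC C f < ⊤}

/-!
The weights `w_j = C^j / j!` satisfy `binom(i+j, j) w_{i+j} = w_i w_j`, so `‖·‖_C` is
submultiplicative, and when `g(0) = 0` and `tⁿ ∣ f` every nonzero term of the Cauchy product
`g f` has `binom(i+j, j) ≥ n + 1`. This gives `n! ‖gⁿ‖_C ≤ ‖g‖_Cⁿ`, so the geometric series
`∑ (-g)ⁿ` is dominated by `exp ‖g‖_C`, whatever the size of `‖g‖_C`. Its coefficients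
stabilise to those of the formal inverse `(1 + g)⁻¹`, which therefore lies in `A_C`, and the
tails `(-g)ᴺ (1 + g)⁻¹` tend to zero.
-/

open PowerSeries Finset
open scoped Nat

theorem ENNReal.tsum_mul_tsum_eq_tsum_sum_antidiagonal {A : Type*} [AddCommMonoid A]
    [HasAntidiagonal A] (f g : A → ℝ≥0∞) :
    (∑' n, f n) * ∑' n, g n = ∑' n, ∑ p ∈ antidiagonal n, f p.1 * g p.2 := by
  simp_rw [← ENNReal.tsum_mul_right, ← ENNReal.tsum_mul_left, ← ENNReal.tsum_prod,
    ← HasAntidiagonal.sigmaAntidiagonalEquivProd.tsum_eq, ENNReal.tsum_sigma',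
    ← Finset.tsum_subtype]
  rfl

theorem nnnorm_coeff_mul_le {R : Type*} [NormedRing R] (f g : R⟦X⟧) (m : ℕ) :
    ‖coeff m (f * g)‖₊ ≤ ∑ p ∈ antidiagonal m, ‖coeff p.1 f‖₊ * ‖coeff p.2 g‖₊ := by
  rw [coeff_mul]
  exact (nnnorm_sum_le _ _).trans (sum_le_sum fun p _ ↦ nnnorm_mul_le _ _)

theorem geom_sum_neg_sub_eq_of_mul_eq_one {R : Type*} [CommRing R] {g h : R}
    (hgh : (1 + g) * h = 1) (N : ℕ) :
    ∑ n ∈ range N, (-g) ^ n - h = -((-g) ^ N * h) := by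
  linear_combination h * geom_sum_mul_neg (-g) N - (∑ n ∈ range N, (-g) ^ n) * hgh

theorem coeff_eq_sum_coeff_neg_pow_of_mul_eq_one {R : Type*} [CommRing R] {g h : R⟦X⟧}
    (hg : constantCoeff g = 0) (hgh : (1 + g) * h = 1) (j : ℕ) :
    coeff j h = ∑ n ∈ range (j + 1), coeff j ((-g) ^ n) := by
  have hdvd : X ^ (j + 1) ∣ (-g) ^ (j + 1) * h :=
    (pow_dvd_pow_of_dvd (X_dvd_iff.mpr (by simp [hg])) _).mul_right h
  have := congrArg (coeff j) (geom_sum_neg_sub_eq_of_mul_eq_one hgh (j + 1))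
  rw [map_neg, X_pow_dvd_iff.mp hdvd j j.lt_succ_self, neg_zero, map_sub, sub_eq_zero,
    map_sum] at this
  exact this.symm

section

variable {C : ℝ}

noncomputable def weight (C : ℝ) (j : ℕ) : ℝ≥0∞ := ENNReal.ofReal (C ^ j / j !)

theorem normC_eq_tsum_weight (C : ℝ) (f : ℂ⟦X⟧) :
    normC C f = ∑' j, (‖coeff j f‖₊ : ℝ≥0∞) * weight C j := rfl

theorem choose_mul_weight_add (hC : 0 ≤ C) (i j : ℕ) :
    ((i + j).choose j : ℝ≥0∞) * weight C (i + j) = weight C i * weight C j := by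
  rw [weight, weight, weight, ← ENNReal.ofReal_natCast, ← ENNReal.ofReal_mul (by positivity),
    ← ENNReal.ofReal_mul (by positivity)]
  congr 1
  have hfac : ((i + j).choose j : ℝ) * i ! * j ! = (i + j)! := by
    exact_mod_cast Nat.add_choose_mul_factorial_mul_factorial i j
  have hchoose : ((i + j).choose j : ℝ) ≠ 0 := by
    exact_mod_cast (Nat.choose_pos (Nat.le_add_left j i)).ne'
  rw [← hfac, pow_add]
  field_simp

theorem natCast_mul_normC_mul_le (hC : 0 ≤ C) {f g : ℂ⟦X⟧} {k : ℕ}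
    (hk : ∀ i j, coeff i f ≠ 0 → coeff j g ≠ 0 → k ≤ (i + j).choose j) :
    (k : ℝ≥0∞) * normC C (f * g) ≤ normC C f * normC C g := by
  set a : ℕ → ℝ≥0∞ := fun i ↦ ‖coeff i f‖₊ * weight C i
  set b : ℕ → ℝ≥0∞ := fun j ↦ ‖coeff j g‖₊ * weight C j
  have hterm : ∀ p : ℕ × ℕ, (‖coeff p.1 f‖₊ * ‖coeff p.2 g‖₊ : ℝ≥0∞) *
      ((k : ℝ≥0∞) * weight C (p.1 + p.2)) ≤ a p.1 * b p.2 := by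
    rintro ⟨i, j⟩
    by_cases hij : coeff i f ≠ 0 ∧ coeff j g ≠ 0
    · calc (‖coeff i f‖₊ * ‖coeff j g‖₊ : ℝ≥0∞) * ((k : ℝ≥0∞) * weight C (i + j))
          ≤ (‖coeff i f‖₊ * ‖coeff j g‖₊ : ℝ≥0∞) *
              (((i + j).choose j : ℝ≥0∞) * weight C (i + j)) := by
            gcongr; exact_mod_cast hk i j hij.1 hij.2
        _ = a i * b j := by rw [choose_mul_weight_add hC]; ring
    · rcases not_and_or.mp hij with h | h <;> simp [not_not.mp h]
  simp only [normC_eq_tsum_weight]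
  rw [ENNReal.tsum_mul_tsum_eq_tsum_sum_antidiagonal, ← ENNReal.tsum_mul_left]
  refine ENNReal.tsum_le_tsum fun m ↦ ?_
  calc (k : ℝ≥0∞) * ((‖coeff m (f * g)‖₊ : ℝ≥0∞) * weight C m)
      ≤ (k : ℝ≥0∞) * ((∑ p ∈ antidiagonal m, ‖coeff p.1 f‖₊ * ‖coeff p.2 g‖₊ : NNReal) *
          weight C m) := by
        gcongr; exact_mod_cast nnnorm_coeff_mul_le f g m
    _ = ∑ p ∈ antidiagonal m, (‖coeff p.1 f‖₊ * ‖coeff p.2 g‖₊ : ℝ≥0∞) *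
          ((k : ℝ≥0∞) * weight C (p.1 + p.2)) := by
        push_cast
        rw [sum_mul, mul_sum]
        refine sum_congr rfl fun p hp ↦ ?_
        rw [mem_antidiagonal.mp hp]
        ring
    _ ≤ ∑ p ∈ antidiagonal m, a p.1 * b p.2 := sum_le_sum fun p _ ↦ hterm p

theorem normC_mul_le (hC : 0 ≤ C) (f g : ℂ⟦X⟧) :
    normC C (f * g) ≤ normC C f * normC C g := by
  simpa using natCast_mul_normC_mul_le (k := 1) hC (f := f) (g := g)
    fun i j _ _ ↦ Nat.choose_pos (Nat.le_add_left j i)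

theorem succ_mul_normC_mul_le (hC : 0 ≤ C) {f g : ℂ⟦X⟧} {n : ℕ}
    (hf : constantCoeff f = 0) (hg : X ^ n ∣ g) :
    (n + 1 : ℝ≥0∞) * normC C (f * g) ≤ normC C f * normC C g := by
  have hk : ∀ i j, coeff i f ≠ 0 → coeff j g ≠ 0 → n + 1 ≤ (i + j).choose j := by
    intro i j hi hj
    have hi : i ≠ 0 := by rintro rfl; exact hi (by rwa [coeff_zero_eq_constantCoeff])
    have hj : n ≤ j := not_lt.mp fun h ↦ hj (X_pow_dvd_iff.mp hg j h)
    calc n + 1 ≤ (j + 1).choose j := by rw [Nat.choose_succ_self_right]; omega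
      _ ≤ (i + j).choose j := Nat.choose_le_choose j (by omega)
  exact_mod_cast natCast_mul_normC_mul_le hC hk

theorem normC_one (C : ℝ) : normC C 1 = 1 := by
  rw [normC, tsum_eq_single 0 fun j hj ↦ by simp [coeff_one, hj]]
  simp

theorem factorial_mul_normC_pow_le (hC : 0 ≤ C) {f : ℂ⟦X⟧} (hf : constantCoeff f = 0) (n : ℕ) :
    (n ! : ℝ≥0∞) * normC C (f ^ n) ≤ normC C f ^ n := by
  induction n with
  | zero => simp [normC_one]
  | succ n ih =>
    have hdvd : X ^ n ∣ f ^ n := pow_dvd_pow_of_dvd (X_dvd_iff.mpr hf) n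
    calc ((n + 1)! : ℝ≥0∞) * normC C (f ^ (n + 1))
        = (n ! : ℝ≥0∞) * ((n + 1 : ℝ≥0∞) * normC C (f * f ^ n)) := by
          rw [Nat.factorial_succ, pow_succ']; push_cast; ring
      _ ≤ (n ! : ℝ≥0∞) * (normC C f * normC C (f ^ n)) :=
          mul_le_mul_right (succ_mul_normC_mul_le hC hf hdvd) _
      _ = normC C f * ((n ! : ℝ≥0∞) * normC C (f ^ n)) := by ring
      _ ≤ normC C f ^ (n + 1) := by rw [pow_succ']; gcongr

theorem ENNReal.tsum_pow_div_factorial_ne_top {a : ℝ≥0∞} (ha : a ≠ ⊤) :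
    ∑' n, a ^ n / (n ! : ℝ≥0∞) ≠ ⊤ := by
  lift a to NNReal using ha
  have hterm : ∀ n, (a : ℝ≥0∞) ^ n / (n ! : ℝ≥0∞) = ((a ^ n / n ! : NNReal) : ℝ≥0∞) := fun n ↦ by
    rw [ENNReal.coe_div (by positivity)]; push_cast; rfl
  simp_rw [hterm]
  rw [ENNReal.tsum_coe_ne_top_iff_summable, ← NNReal.summable_coe]
  simpa using Real.summable_pow_div_factorial a

theorem tsum_normC_pow_ne_top (hC : 0 ≤ C) {f : ℂ⟦X⟧} (hf0 : constantCoeff f = 0)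
    (hf : normC C f ≠ ⊤) : ∑' n, normC C (f ^ n) ≠ ⊤ := by
  refine ne_top_of_le_ne_top (ENNReal.tsum_pow_div_factorial_ne_top hf)
    (ENNReal.tsum_le_tsum fun n ↦ ?_)
  rw [ENNReal.le_div_iff_mul_le (by simp [Nat.factorial_ne_zero]) (by simp), mul_comm]
  exact factorial_mul_normC_pow_le hC hf0 n

theorem normC_neg (C : ℝ) (f : ℂ⟦X⟧) : normC C (-f) = normC C f := by
  simp only [normC, map_neg, nnnorm_neg]

theorem normC_le_tsum_of_coeff_eq_sum {f : ℂ⟦X⟧} {F : ℕ → ℂ⟦X⟧}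
    (hF : ∀ j, ∃ N, coeff j f = ∑ n ∈ range N, coeff j (F n)) :
    normC C f ≤ ∑' n, normC C (F n) := by
  simp_rw [normC_eq_tsum_weight]
  rw [ENNReal.tsum_comm]
  refine ENNReal.tsum_le_tsum fun j ↦ ?_
  obtain ⟨N, hN⟩ := hF j
  calc (‖coeff j f‖₊ : ℝ≥0∞) * weight C j
      ≤ ∑ n ∈ range N, (‖coeff j (F n)‖₊ : ℝ≥0∞) * weight C j := by
        rw [← sum_mul, hN]; gcongr; exact_mod_cast nnnorm_sum_le _ _
    _ ≤ ∑' n, (‖coeff j (F n)‖₊ : ℝ≥0∞) * weight C j := ENNReal.sum_le_tsum _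

end

/-- If `g ∈ A_C` has vanishing constant coefficient then the geometric series
`∑ₙ (−g)ⁿ` converges in `(A_C, ‖·‖_C)` and its sum is a two-sided inverse of
`1 + g`; in particular `1 + g` is a unit of the ring `A_C`. -/
theorem statement_6 (C : ℝ) (hC : 0 < C) (g : PowerSeries ℂ) (hg : g ∈ Asub C)
    (h0 : PowerSeries.constantCoeff (R := ℂ) g = 0) :
    ∃ h ∈ Asub C,
      Filter.Tendsto
        (fun N : ℕ => normC C ((∑ n ∈ Finset.range N, (-g) ^ n) - h))
        Filter.atTop (nhds 0) ∧
      (1 + g) * h = 1 ∧ h * (1 + g) = 1 := by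
  have hinv : (1 + g) * (1 + g)⁻¹ = 1 := PowerSeries.mul_inv_cancel _ (by simp [h0])
  have hpow : ∑' n, normC C ((-g) ^ n) ≠ ⊤ :=
    tsum_normC_pow_ne_top hC.le (by simp [h0]) (by rw [normC_neg]; exact hg.ne)
  have hmem : normC C (1 + g)⁻¹ ≠ ⊤ := ne_top_of_le_ne_top hpow <|
    normC_le_tsum_of_coeff_eq_sum fun j ↦
      ⟨j + 1, coeff_eq_sum_coeff_neg_pow_of_mul_eq_one h0 hinv j⟩
  refine ⟨(1 + g)⁻¹, hmem.lt_top, ?_, hinv, by rw [mul_comm, hinv]⟩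
  have htail : Filter.Tendsto (fun N ↦ normC C ((-g) ^ N) * normC C (1 + g)⁻¹)
      Filter.atTop (nhds 0) := by
    simpa using
      ENNReal.Tendsto.mul_const (ENNReal.tendsto_atTop_zero_of_tsum_ne_top hpow) (Or.inr hmem)
  refine tendsto_of_tendsto_of_tendsto_of_le_of_le tendsto_const_nhds htail (fun _ ↦ zero_le)
    fun N ↦ ?_
  rw [geom_sum_neg_sub_eq_of_mul_eq_one hinv, normC_neg]
  exact normC_mul_le hC.le _ _
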